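/- arXiv:1801.00582 — 4 statements merged into one kernel-verified Lean document; each statement's English description precedes it below -/
import Mathlib

section
/- Let M = C[E4, E6] be the polynomial algebra in two variables with the Serre derivation S defined by S(E4) = −(1/3)E6 and S(E6) = −(1/2)E4². Then the kernel of S is the polynomial subalgebra C[Δ], where Δ = (1/1728)(E4³ − E6²). -/
open MvPolynomial

noncomputable def ii : Polynomial ℂ →ₐ[ℂ] MvPolynomial (Fin 2) ℂ := Polynomial.aeval (X 0)

noncomputable def ph : MvPolynomial (Fin 2) ℂ →ₐ[ℂ] Polynomial ℂ :=
  MvPolynomial.aeval ![Polynomial.X ^ 2, Polynomial.X ^ 3]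

noncomputable abbrev ee := MvPolynomial.finSuccEquiv ℂ 1

lemma ph_X0 : ph (X 0) = Polynomial.X ^ 2 := by simp [ph]
lemma ph_X1 : ph (X 1) = Polynomial.X ^ 3 := by simp [ph]

lemma ph_ii (a : Polynomial ℂ) : ph (ii a) = Polynomial.expand ℂ 2 a := by
  rw [ii, ← Polynomial.aeval_algHom_apply, ph_X0, Polynomial.expand_eq_comp_X_pow,
    Polynomial.comp, Polynomial.aeval_def, Polynomial.algebraMap_eq]

lemma remainder (f : MvPolynomial (Fin 2) ℂ) :
    ∃ (q : MvPolynomial (Fin 2) ℂ) (a b : Polynomial ℂ),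
      f = q * (X 1 ^ 2 - X 0 ^ 3) + ii a + ii b * X 1 := by
  induction f using MvPolynomial.induction_on with
  | C c => exact ⟨0, Polynomial.C c, 0, by simp [ii]⟩
  | add p r hp hr =>
      obtain ⟨q1, a1, b1, h1⟩ := hp
      obtain ⟨q2, a2, b2, h2⟩ := hr
      exact ⟨q1 + q2, a1 + a2, b1 + b2, by rw [h1, h2]; simp only [map_add]; ring⟩
  | mul_X p i ih =>
      obtain ⟨q, a, b, h⟩ := ih
      fin_cases i
      · refine ⟨q * X 0, Polynomial.X * a, Polynomial.X * b, ?_⟩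
        rw [h]; simp only [Fin.zero_eta, Fin.mk_one, map_mul, ii, Polynomial.aeval_X]; ring
      · refine ⟨q * X 1 + ii b, Polynomial.X ^ 3 * b, a, ?_⟩
        rw [h]; simp only [Fin.zero_eta, Fin.mk_one, map_mul, ii, Polynomial.aeval_X,
          map_pow]; ring

lemma parity {a b : Polynomial ℂ} {c : ℂ}
    (h : Polynomial.expand ℂ 2 a + Polynomial.X ^ 3 * Polynomial.expand ℂ 2 b = Polynomial.C c) :
    a = Polynomial.C c ∧ b = 0 := by
  have hb : b = 0 := by
    ext n
    have h2 := congrArg (fun p => Polynomial.coeff p (2 * n + 3)) h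
    simp only [Polynomial.coeff_add] at h2
    rw [Polynomial.coeff_expand (by norm_num)] at h2
    rw [show 2 * n + 3 = (2 * n) + 3 from rfl, Polynomial.coeff_X_pow_mul,
      Polynomial.coeff_expand_mul' (by norm_num)] at h2
    simp only [Polynomial.coeff_C] at h2
    rw [if_neg (by omega), if_neg (by omega)] at h2
    simpa using h2
  subst hb
  simp only [map_zero, mul_zero, add_zero] at h
  exact ⟨(Polynomial.expand_eq_C (by norm_num)).mp h, rfl⟩

lemma key (S : Derivation ℂ (MvPolynomial (Fin 2) ℂ) (MvPolynomial (Fin 2) ℂ))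
    (h4 : S (X 0) = (-(1/3) : ℂ) • X 1)
    (h6 : S (X 1) = (-(1/2) : ℂ) • (X 0 ^ 2)) (f : MvPolynomial (Fin 2) ℂ) :
    ph (S f) = Polynomial.C (-(1/6) : ℂ) * (Polynomial.X ^ 2 * Polynomial.derivative (ph f)) := by
  induction f using MvPolynomial.induction_on with
  | C c =>
      rw [← MvPolynomial.algebraMap_eq, Derivation.map_algebraMap]
      simp
  | add p r hp hr => simp only [map_add, Polynomial.derivative_add, hp, hr]; ring
  | mul_X p i ih =>
      rw [Derivation.leibniz, smul_eq_mul, smul_eq_mul]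
      fin_cases i
      · simp only [Fin.zero_eta, h4, map_add, map_mul, map_smul, ph_X0, ph_X1, ih,
          Polynomial.smul_eq_C_mul, Polynomial.derivative_mul, Polynomial.derivative_X_pow]
        push_cast
        have hC : Polynomial.C (-(1/3) : ℂ) = Polynomial.C (-(1/6) : ℂ) * Polynomial.C 2 := by
          rw [← Polynomial.C_mul]; norm_num
        linear_combination (ph p * Polynomial.X ^ 3) * hC
      · simp only [Fin.mk_one, h6, map_add, map_mul, map_smul, map_pow, ph_X0, ph_X1, ih,
          Polynomial.smul_eq_C_mul, Polynomial.derivative_mul, Polynomial.derivative_X_pow]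
        push_cast
        have hC : Polynomial.C (-(1/2) : ℂ) = Polynomial.C (-(1/6) : ℂ) * Polynomial.C 3 := by
          rw [← Polynomial.C_mul]; norm_num
        linear_combination (ph p * Polynomial.X ^ 4) * hC

lemma Sg0 (S : Derivation ℂ (MvPolynomial (Fin 2) ℂ) (MvPolynomial (Fin 2) ℂ))
    (h4 : S (X 0) = (-(1/3) : ℂ) • X 1)
    (h6 : S (X 1) = (-(1/2) : ℂ) • (X 0 ^ 2)) :
    S (X 0 ^ 3 - X 1 ^ 2) = 0 := by
  rw [map_sub, Derivation.leibniz_pow, Derivation.leibniz_pow, h4, h6]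
  simp only [smul_eq_mul, MvPolynomial.smul_eq_C_mul, nsmul_eq_mul]
  push_cast
  have hC : (3 : MvPolynomial (Fin 2) ℂ) * MvPolynomial.C (-(1/3) : ℂ)
      = 2 * MvPolynomial.C (-(1/2) : ℂ) := by
    rw [(map_ofNat (MvPolynomial.C : ℂ →+* MvPolynomial (Fin 2) ℂ) 3).symm,
      (map_ofNat (MvPolynomial.C : ℂ →+* MvPolynomial (Fin 2) ℂ) 2).symm, ← MvPolynomial.C_mul,
      ← MvPolynomial.C_mul]
    norm_num
  linear_combination (X 0 ^ 2 * X 1) * hC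

lemma eg : ee (X 1 ^ 2 - X 0 ^ 3) = -(Polynomial.X ^ 3 - Polynomial.C (X 0 ^ 2)) := by
  rw [map_sub, map_pow, map_pow, MvPolynomial.finSuccEquiv_X_zero,
    show (1 : Fin 2) = Fin.succ 0 from rfl, MvPolynomial.finSuccEquiv_X_succ, ← map_pow]
  ring

lemma eg_deg : (ee (X 1 ^ 2 - X 0 ^ 3)).natDegree = 3 := by
  rw [eg, Polynomial.natDegree_neg, Polynomial.natDegree_X_pow_sub_C]

lemma eg_ne : (X 1 ^ 2 - X 0 ^ 3 : MvPolynomial (Fin 2) ℂ) ≠ 0 := by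
  intro h
  have := congrArg ee h
  rw [eg, map_zero, neg_eq_zero] at this
  exact Polynomial.X_pow_sub_C_ne_zero (by norm_num) _ this

lemma ee_C (c : ℂ) : ee (MvPolynomial.C c) = Polynomial.C (MvPolynomial.C c) := by
  simp [MvPolynomial.finSuccEquiv_apply]

lemma ph_g : ph (X 1 ^ 2 - X 0 ^ 3) = 0 := by
  rw [map_sub, map_pow, map_pow, ph_X0, ph_X1]; ring

lemma gmem : (X 1 ^ 2 - X 0 ^ 3 : MvPolynomial (Fin 2) ℂ) ∈ Algebra.adjoin ℂ
    ({((1/1728 : ℂ) • (X 0 ^ 3 - X 1 ^ 2))} : Set (MvPolynomial (Fin 2) ℂ)) := by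
  have h : (X 1 ^ 2 - X 0 ^ 3 : MvPolynomial (Fin 2) ℂ)
      = (-1728 : ℂ) • ((1/1728 : ℂ) • (X 0 ^ 3 - X 1 ^ 2)) := by
    rw [smul_smul, show ((-1728 : ℂ) * (1/1728)) = -1 by norm_num, neg_one_smul, neg_sub]
  rw [h]
  exact Subalgebra.smul_mem _ (Algebra.self_mem_adjoin_singleton ℂ _) _

lemma forward (S : Derivation ℂ (MvPolynomial (Fin 2) ℂ) (MvPolynomial (Fin 2) ℂ))
    (h4 : S (X 0) = (-(1/3) : ℂ) • X 1)
    (h6 : S (X 1) = (-(1/2) : ℂ) • (X 0 ^ 2)) :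
    ∀ (n : ℕ) (f : MvPolynomial (Fin 2) ℂ), (ee f).natDegree ≤ n → S f = 0 →
      f ∈ Algebra.adjoin ℂ
        ({((1/1728 : ℂ) • (X 0 ^ 3 - X 1 ^ 2))} : Set (MvPolynomial (Fin 2) ℂ)) := by
  intro n
  induction n using Nat.strong_induction_on with
  | _ n IH =>
  intro f hdeg hSf
  obtain ⟨q, a, b, hf⟩ := remainder f
  -- ph f is a constant
  have hd0 : Polynomial.derivative (ph f) = 0 := by
    have hk := key S h4 h6 f
    rw [hSf, map_zero] at hk
    rcases mul_eq_zero.mp hk.symm with h | h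
    · exact absurd h (by simp)
    rcases mul_eq_zero.mp h with h' | h'
    · exact absurd h' (pow_ne_zero _ Polynomial.X_ne_zero)
    · exact h'
  have hc : ph f = Polynomial.C ((ph f).coeff 0) := Polynomial.eq_C_of_derivative_eq_zero hd0
  set c := (ph f).coeff 0 with hcdef
  have hphf : Polynomial.expand ℂ 2 a + Polynomial.X ^ 3 * Polynomial.expand ℂ 2 b
      = Polynomial.C c := by
    rw [← hc, hf]
    simp only [map_add, map_mul, ph_g, mul_zero, zero_add, ph_ii, ph_X1]
    ring
  obtain ⟨ha, hb⟩ := parity hphf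
  subst ha hb
  have hiic : ii (Polynomial.C c) = MvPolynomial.C c := by
    simp [ii, MvPolynomial.algebraMap_eq]
  rw [map_zero, zero_mul, add_zero, hiic] at hf
  -- S q = 0
  have hSq : S q = 0 := by
    rw [hf, map_add, ← MvPolynomial.algebraMap_eq, Derivation.map_algebraMap, add_zero,
      Derivation.leibniz, show (X 1 ^ 2 - X 0 ^ 3 : MvPolynomial (Fin 2) ℂ)
        = -(X 0 ^ 3 - X 1 ^ 2) by ring, map_neg, Sg0 S h4 h6, neg_zero, smul_zero, zero_add,
      smul_eq_mul, neg_mul, neg_eq_zero] at hSf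
    rcases mul_eq_zero.mp hSf with h | h
    · exact absurd h (fun h' => eg_ne (by rw [show (X 1 ^ 2 - X 0 ^ 3 : MvPolynomial (Fin 2) ℂ)
        = -(X 0 ^ 3 - X 1 ^ 2) by ring, h', neg_zero]))
    · exact h
  by_cases hq : q = 0
  · rw [hf, hq, zero_mul, zero_add, ← MvPolynomial.algebraMap_eq]
    exact Subalgebra.algebraMap_mem _ c
  · have heqne : ee q ≠ 0 := fun h => hq (ee.injective (by rw [h, map_zero]))
    have hegne : ee (X 1 ^ 2 - X 0 ^ 3) ≠ 0 :=
      fun h => eg_ne (ee.injective (by rw [h, map_zero]))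
    have hdq : (ee f).natDegree = (ee q).natDegree + 3 := by
      rw [hf, map_add, map_mul, ee_C,
        Polynomial.natDegree_add_eq_left_of_natDegree_lt, Polynomial.natDegree_mul heqne hegne,
        eg_deg]
      rw [Polynomial.natDegree_mul heqne hegne, eg_deg, Polynomial.natDegree_C]
      omega
    have hmem := IH (ee q).natDegree (by omega) q le_rfl hSq
    rw [hf]
    exact Subalgebra.add_mem _ (Subalgebra.mul_mem _ hmem gmem)
      (by rw [← MvPolynomial.algebraMap_eq]; exact Subalgebra.algebraMap_mem _ c)

open MvPolynomial in
/-- In `M = ℂ[E4,E6]` (here `E4 = X 0`, `E6 = X 1`) with the Serre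
derivation `S` determined by `S(E4) = −E6/3`, `S(E6) = −E4²/2`, the kernel of `S` is
the subalgebra `ℂ[Δ]` where `Δ = (E4³ − E6²)/1728`. -/
theorem stmt2 (S : Derivation ℂ (MvPolynomial (Fin 2) ℂ) (MvPolynomial (Fin 2) ℂ))
    (h4 : S (X 0) = (-(1/3) : ℂ) • X 1)
    (h6 : S (X 1) = (-(1/2) : ℂ) • (X 0 ^ 2)) :
    ∀ f : MvPolynomial (Fin 2) ℂ, S f = 0 ↔
      f ∈ Algebra.adjoin ℂ
        ({((1/1728 : ℂ) • (X 0 ^ 3 - X 1 ^ 2))} : Set (MvPolynomial (Fin 2) ℂ)) := by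
  intro f
  constructor
  · exact fun h => forward S h4 h6 _ f le_rfl h
  · intro hf
    induction hf using Algebra.adjoin_induction with
    | mem x hx =>
        rcases Set.mem_singleton_iff.mp hx with rfl
        rw [Derivation.map_smul, Sg0 S h4 h6, smul_zero]
    | algebraMap r => exact Derivation.map_algebraMap S r
    | add x y _ _ hx hy => rw [map_add, hx, hy, add_zero]
    | mul x y _ _ hx hy => rw [Derivation.leibniz, hx, hy, smul_zero, smul_zero, add_zero]
end

section
/- In the graded polynomial algebra C[E2,E4,E6] with Ramanujan derivation D and Serre derivation S(f) = D(f) − (k/12)E2 f, the second Serre-Rankin-Cohen bracket and the second Rankin-Cohen bracket of homogeneous f of weight k and g of weight ℓ satisfy SRC_2(f,g) = RC_2(f,g) + (1/288)·k·ℓ·(k+ℓ+2)·f·g·E4. -/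
open MvPolynomial in
/-- In `ℂ[E2,E4,E6]` (`E2 = X 0`, `E4 = X 1`, `E6 = X 2`) with the
Ramanujan derivation `D` and Serre derivation `S_k(f) = D(f) − (k/12)E2 f`, the second
Serre-Rankin-Cohen bracket and second Rankin-Cohen bracket of `f` of weight `k` and `g`
of weight `ℓ` satisfy `SRC_2(f,g) = RC_2(f,g) + (1/288)kℓ(k+ℓ+2)·f·g·E4`.
(`RC_2(f,g) = C(k+1,2) f D²g − (k+1)(ℓ+1) Df Dg + C(ℓ+1,2) D²f g`, and `SRC_2` is the
same expression with `D` replaced by `S`.) -/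
theorem stmt6 (D : Derivation ℂ (MvPolynomial (Fin 3) ℂ) (MvPolynomial (Fin 3) ℂ))
    (h2 : D (X 0) = (1/12 : ℂ) • (X 0 ^ 2 - X 1))
    (h4 : D (X 1) = (1/3 : ℂ) • (X 0 * X 1 - X 2))
    (h6 : D (X 2) = (1/2 : ℂ) • (X 0 * X 2 - X 1 ^ 2))
    (S : ℤ → MvPolynomial (Fin 3) ℂ → MvPolynomial (Fin 3) ℂ)
    (hS : ∀ (m : ℤ) (h : MvPolynomial (Fin 3) ℂ),
      S m h = D h - ((m : ℂ) / 12) • (X 0 * h))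
    (k ℓ : ℤ) (f g : MvPolynomial (Fin 3) ℂ) :
    ((((k : ℂ) + 1) * k / 2) • (f * S (ℓ + 2) (S ℓ g))
      - (((k : ℂ) + 1) * ((ℓ : ℂ) + 1)) • (S k f * S ℓ g)
      + ((((ℓ : ℂ) + 1) * ℓ / 2) • (S (k + 2) (S k f) * g)))
    = ((((k : ℂ) + 1) * k / 2) • (f * D (D g))
        - (((k : ℂ) + 1) * ((ℓ : ℂ) + 1)) • (D f * D g)
        + ((((ℓ : ℂ) + 1) * ℓ / 2) • (D (D f) * g)))
      + ((k : ℂ) * ℓ * ((k : ℂ) + ℓ + 2) / 288) • (f * g * X 1) := by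
  simp only [hS, map_sub, Derivation.map_smul, Derivation.leibniz, h2,
    smul_sub, smul_add, smul_smul, smul_mul_assoc, mul_smul_comm, smul_eq_mul,
    mul_add, add_mul, mul_sub, sub_mul, mul_assoc,
    mul_comm, mul_left_comm, pow_two]
  match_scalars <;> ring
end

section
/- Let R = ⊕_{k,p} R_{k,p} be a bigraded commutative C-algebra, V a derivation of degree (2,0), μ ∈ C, and W the derivation acting on R_{k,p} as multiplication by k+μp. Then the Connes–Moscovici brackets specialize on homogeneous elements to χ_n^{[μ]}(f,g) = Σ_{r=0}^n (−1)^r · C(k+μp+n−1, n−r) · C(ℓ+μq+n−1, r) · V^r(f) · V^{n−r}(g) for f ∈ R_{k,p} and g ∈ R_{ℓ,q}, where C(x,m) = x(x−1)⋯(x−m+1)/m! denotes the generalized binomial coefficient; i.e., for f ∈ R_{k,p}, (1/(r!(n−r)!))·(V^r∘(W+r·Id)^{<n−r>})(f) = C(k+μp+n−1, n−r)·V^r(f) up to the stated combination. -/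
/-!
On `ℛ (k, p)` the operator `W` is the scalar `a = k + μp`, so `(W + r·Id)^{<m>}` acts there as the
rising factorial `(a + r)(a + r + 1)⋯(a + r + m - 1)`; with `m = n - r` this is
`(n - r)! · C(a + n - 1, n - r)`, and `V^r` only sees the scalar.  The identity therefore holds
term by term.
-/

open Finset

/-- The generalized binomial coefficient `C(x,m) = x(x−1)⋯(x−m+1)/m!`. -/
noncomputable def genBinom (x : ℂ) (m : ℕ) : ℂ :=
  (∏ i ∈ range m, (x - (i : ℂ))) / (m.factorial : ℂ)

/-- The Pochhammer iterate `F^{<m>}`: `F^{<0>} = Id`, `F^{<m>} = F^{<m−1>} ∘ (F + (m−1)·Id)`. -/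
noncomputable def pochIter {A : Type*} [CommRing A] [Algebra ℂ A]
    (F : A →ₗ[ℂ] A) : ℕ → A →ₗ[ℂ] A
  | 0 => LinearMap.id
  | (m + 1) => (pochIter F m) ∘ₗ (F + (m : ℂ) • LinearMap.id)

lemma pochIter_add_smul_id_apply_of_eq_smul {A : Type*} [CommRing A] [Algebra ℂ A]
    {W : A →ₗ[ℂ] A} {a : ℂ} {f : A} (hWf : W f = a • f) (c : ℂ) (m : ℕ) :
    pochIter (W + c • LinearMap.id) m f = (∏ j ∈ range m, (a + c + j)) • f := by
  induction m with
  | zero => simp [pochIter]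
  | succ m ih =>
    simp only [pochIter, LinearMap.comp_apply, LinearMap.add_apply, LinearMap.smul_apply,
      LinearMap.id_apply, hWf, ← add_smul, map_smul, ih, smul_smul, prod_range_succ]
    ring_nf

lemma genBinom_add_natCast_sub_one (y : ℂ) (m : ℕ) :
    genBinom (y + m - 1) m = (∏ j ∈ range m, (y + j)) / m.factorial := by
  rw [genBinom, ← prod_range_reflect (fun j => y + j) m]
  congr 1
  refine prod_congr rfl fun j hj => ?_
  rw [Nat.sub_sub, Nat.cast_sub (by have := mem_range.mp hj; omega)]
  push_cast
  ring

theorem stmt9_general (A : Type*) [CommRing A] [Algebra ℂ A]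
    (ℛ : ℤ × ℤ → Submodule ℂ A)
    (V W : A →ₗ[ℂ] A) (μ : ℂ)
    (hW : ∀ (k p : ℤ), ∀ f ∈ ℛ (k, p), W f = ((k : ℂ) + μ * (p : ℂ)) • f)
    (n : ℕ) (k p ℓ q : ℤ) (f g : A)
    (hf : f ∈ ℛ (k, p)) (hg : g ∈ ℛ (ℓ, q)) :
    ∑ r ∈ range (n + 1),
      ((-1 : ℂ) ^ r / ((r.factorial : ℂ) * ((n - r).factorial : ℂ))) •
        (((V ^ r) (pochIter (W + (r : ℂ) • LinearMap.id) (n - r) f)) *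
         ((V ^ (n - r)) (pochIter (W + ((n - r : ℕ) : ℂ) • LinearMap.id) r g)))
    = ∑ r ∈ range (n + 1),
      ((-1 : ℂ) ^ r * genBinom ((k : ℂ) + μ * (p : ℂ) + n - 1) (n - r)
          * genBinom ((ℓ : ℂ) + μ * (q : ℂ) + n - 1) r) •
        ((V ^ r) f * (V ^ (n - r)) g) := by
  refine sum_congr rfl fun r hr => ?_
  have hrn : r ≤ n := Nat.lt_succ_iff.mp (mem_range.mp hr)
  rw [pochIter_add_smul_id_apply_of_eq_smul (hW k p f hf),
    pochIter_add_smul_id_apply_of_eq_smul (hW ℓ q g hg),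
    map_smul, map_smul, smul_mul_smul_comm, smul_smul]
  congr 1
  have hf_top : (k : ℂ) + μ * p + n - 1 = (k + μ * p + r) + ((n - r : ℕ) : ℂ) - 1 := by
    push_cast [hrn]; ring
  have hg_top : (ℓ : ℂ) + μ * q + n - 1 = (ℓ + μ * q + (n - r : ℕ)) + (r : ℂ) - 1 := by
    push_cast [hrn]; ring
  rw [hf_top, hg_top, genBinom_add_natCast_sub_one, genBinom_add_natCast_sub_one]
  ring

/-- On a bigraded commutative `ℂ`-algebra with `V` of degree `(2,0)` and
`W` acting on `ℛ (k,p)` as `k+μp`, the Connes–Moscovici brackets specialize on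
homogeneous elements `f ∈ ℛ (k,p)`, `g ∈ ℛ (ℓ,q)` to
`χ_n^{[μ]}(f,g) = Σ_r (−1)^r C(k+μp+n−1,n−r) C(ℓ+μq+n−1,r) V^r(f) V^{n−r}(g)`. -/
theorem stmt9 (A : Type*) [CommRing A] [Algebra ℂ A]
    (ℛ : ℤ × ℤ → Submodule ℂ A)
    (V W : A →ₗ[ℂ] A) (μ : ℂ)
    (hV : ∀ (k p : ℤ), ∀ f ∈ ℛ (k, p), V f ∈ ℛ (k + 2, p))
    (hW : ∀ (k p : ℤ), ∀ f ∈ ℛ (k, p), W f = ((k : ℂ) + μ * (p : ℂ)) • f)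
    (n : ℕ) (k p ℓ q : ℤ) (f g : A)
    (hf : f ∈ ℛ (k, p)) (hg : g ∈ ℛ (ℓ, q)) :
    ∑ r ∈ range (n + 1),
      ((-1 : ℂ) ^ r / ((r.factorial : ℂ) * ((n - r).factorial : ℂ))) •
        (((V ^ r) (pochIter (W + (r : ℂ) • LinearMap.id) (n - r) f)) *
         ((V ^ (n - r)) (pochIter (W + ((n - r : ℕ) : ℂ) • LinearMap.id) r g)))
    = ∑ r ∈ range (n + 1),
      ((-1 : ℂ) ^ r * genBinom ((k : ℂ) + μ * (p : ℂ) + n - 1) (n - r)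
          * genBinom ((ℓ : ℂ) + μ * (q : ℂ) + n - 1) r) •
        ((V ^ r) f * (V ^ (n - r)) g) :=
  stmt9_general A ℛ V W μ hW n k p ℓ q f g hf hg
end

section
/- Let K = C[E4, E6, A, A^{-1}, B] be the localization of J = C[E4,E6,A,B] at A, with F2 = B·A^{-1}. For α ∈ C let d_α be the derivation of K with d_α(E4) = −E6/3 + 4α E4 F2, d_α(E6) = −E4²/2 + 6α E6 F2, d_α(F2) = −E4/12 + 2α F2², d_α(A) = −2α A F2. Then the subalgebra J is stable under d_α if and only if α = 0. -/
open MvPolynomial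

set_option maxHeartbeats 1000000

/-- Let `K = ℂ[E4,E6,A^{±1},B]`, the localization of
`J = ℂ[E4,E6,A,B]` at `A` (`E4 = X 0`, `E6 = X 1`, `A = X 2`, `B = X 3`), and
`F2 = B·A⁻¹`. For `α ∈ ℂ` let `d_α` be the derivation of `K` with
`d_α(E4) = −E6/3 + 4αE4F2`, `d_α(E6) = −E4²/2 + 6αE6F2`, `d_α(F2) = −E4/12 + 2αF2²`,
`d_α(A) = −2αAF2`. Then the subalgebra `J` is stable under `d_α` iff `α = 0`. -/
theorem stmt15 (α : ℂ)
    (d : Derivation ℂ (Localization.Away (X 2 : MvPolynomial (Fin 4) ℂ))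
      (Localization.Away (X 2 : MvPolynomial (Fin 4) ℂ)))
    (e4 e6 a bb ainv f2 : Localization.Away (X 2 : MvPolynomial (Fin 4) ℂ))
    (he4 : e4 = algebraMap (MvPolynomial (Fin 4) ℂ) _ (X 0))
    (he6 : e6 = algebraMap (MvPolynomial (Fin 4) ℂ) _ (X 1))
    (ha : a = algebraMap (MvPolynomial (Fin 4) ℂ) _ (X 2))
    (hbb : bb = algebraMap (MvPolynomial (Fin 4) ℂ) _ (X 3))
    (hainv : a * ainv = 1)
    (hf2 : f2 = bb * ainv)
    (hd4 : d e4 = (-(1/3) : ℂ) • e6 + (4 * α) • (e4 * f2))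
    (hd6 : d e6 = (-(1/2) : ℂ) • e4 ^ 2 + (6 * α) • (e6 * f2))
    (hdf2 : d f2 = (-(1/12) : ℂ) • e4 + (2 * α) • f2 ^ 2)
    (hda : d a = (-2 * α) • (a * f2)) :
    (∀ f ∈ Algebra.adjoin ℂ ({e4, e6, a, bb} :
        Set (Localization.Away (X 2 : MvPolynomial (Fin 4) ℂ))),
      d f ∈ Algebra.adjoin ℂ ({e4, e6, a, bb} :
        Set (Localization.Away (X 2 : MvPolynomial (Fin 4) ℂ)))) ↔ α = 0 := by
  have hz : ∀ x : Localization.Away (X 2 : MvPolynomial (Fin 4) ℂ),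
      (0 : ℂ) • x = 0 := fun x => zero_smul ℂ x
  have hmsc : ∀ (r : ℂ) (x y : Localization.Away (X 2 : MvPolynomial (Fin 4) ℂ)),
      x * (r • y) = r • (x * y) := fun r x y => mul_smul_comm r x y
  have hsma : ∀ (r : ℂ) (x y : Localization.Away (X 2 : MvPolynomial (Fin 4) ℂ)),
      (r • x) * y = r • (x * y) := fun r x y => smul_mul_assoc r x y
  have hsd : ∀ (r : ℂ) (x : Localization.Away (X 2 : MvPolynomial (Fin 4) ℂ)),
      r • x = algebraMap ℂ _ r * x := fun r x => Algebra.smul_def r x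
  have hm4 : e4 ∈ Algebra.adjoin ℂ ({e4, e6, a, bb} :
      Set (Localization.Away (X 2 : MvPolynomial (Fin 4) ℂ))) :=
    Algebra.subset_adjoin (by simp)
  have hm6 : e6 ∈ Algebra.adjoin ℂ ({e4, e6, a, bb} :
      Set (Localization.Away (X 2 : MvPolynomial (Fin 4) ℂ))) :=
    Algebra.subset_adjoin (by simp)
  have hma : a ∈ Algebra.adjoin ℂ ({e4, e6, a, bb} :
      Set (Localization.Away (X 2 : MvPolynomial (Fin 4) ℂ))) :=
    Algebra.subset_adjoin (by simp)
  have hf2a : f2 * a = bb := by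
    rw [hf2, mul_assoc, mul_comm ainv a, hainv, mul_one]
  constructor
  · intro h
    have hJle : Algebra.adjoin ℂ ({e4, e6, a, bb} :
        Set (Localization.Away (X 2 : MvPolynomial (Fin 4) ℂ))) ≤
        (IsScalarTower.toAlgHom ℂ (MvPolynomial (Fin 4) ℂ)
          (Localization.Away (X 2 : MvPolynomial (Fin 4) ℂ))).range := by
      rw [Algebra.adjoin_le_iff]
      intro x hx
      simp only [Set.mem_insert_iff, Set.mem_singleton_iff] at hx
      rcases hx with rfl | rfl | rfl | rfl
      · exact ⟨X 0, he4.symm⟩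
      · exact ⟨X 1, he6.symm⟩
      · exact ⟨X 2, ha.symm⟩
      · exact ⟨X 3, hbb.symm⟩
    have h4 := h e4 hm4
    have hmem : ((4 * α) • (e4 * f2)) ∈ Algebra.adjoin ℂ ({e4, e6, a, bb} :
        Set (Localization.Away (X 2 : MvPolynomial (Fin 4) ℂ))) := by
      have heq : (4 * α) • (e4 * f2) = d e4 + (1/3 : ℂ) • e6 := by
        rw [hd4]; module
      rw [heq]
      exact add_mem h4 (Subalgebra.smul_mem _ hm6 _)
    obtain ⟨p, hp⟩ := hJle hmem
    have hinj : Function.Injective (algebraMap (MvPolynomial (Fin 4) ℂ)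
        (Localization.Away (X 2 : MvPolynomial (Fin 4) ℂ))) :=
      IsLocalization.injective _
        (powers_le_nonZeroDivisors_of_noZeroDivisors (X_ne_zero 2))
    have hp' : algebraMap (MvPolynomial (Fin 4) ℂ)
        (Localization.Away (X 2 : MvPolynomial (Fin 4) ℂ)) p
        = (4 * α) • (e4 * f2) := hp
    have key : p * X 2 = C (4 * α) * (X 0 * X 3) := by
      apply hinj
      rw [map_mul _ p (X 2), map_mul _ (C (4 * α)) (X 0 * X 3),
        map_mul _ (X 0 : MvPolynomial (Fin 4) ℂ) (X 3), hp', ← ha, ← he4, ← hbb,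
        hsma, mul_assoc, hf2a, hsd,
        IsScalarTower.algebraMap_apply ℂ (MvPolynomial (Fin 4) ℂ)
          (Localization.Away (X 2 : MvPolynomial (Fin 4) ℂ)),
        MvPolynomial.algebraMap_eq]
    have hev := congrArg (eval (fun i : Fin 4 => if i = 2 then (0:ℂ) else 1)) key
    simp at hev
    exact hev
  · intro hα
    subst hα
    have hda0 : d a = 0 := by rw [hda, mul_zero, hz]
    have hdf2' : d f2 = (-(1/12) : ℂ) • e4 := by rw [hdf2, mul_zero, hz, add_zero]
    have hdb : d bb = (-(1/12) : ℂ) • (a * e4) := by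
      have h1 : d bb = f2 * d a + a * d f2 := by
        rw [← hf2a]; exact d.leibniz f2 a
      rw [h1, hda0, hdf2', mul_zero, zero_add, hmsc]
    intro f hf
    induction hf using Algebra.adjoin_induction with
    | mem x hx =>
      simp only [Set.mem_insert_iff, Set.mem_singleton_iff] at hx
      rcases hx with rfl | rfl | rfl | rfl
      · rw [hd4, mul_zero, hz, add_zero]
        exact Subalgebra.smul_mem _ hm6 _
      · rw [hd6, mul_zero, hz, add_zero]
        exact Subalgebra.smul_mem _ (pow_mem hm4 2) _
      · rw [hda0]; exact Subalgebra.zero_mem _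
      · rw [hdb]
        exact Subalgebra.smul_mem _ (mul_mem hma hm4) _
    | algebraMap r => rw [Derivation.map_algebraMap]; exact Subalgebra.zero_mem _
    | add x y hx hy ihx ihy => rw [map_add]; exact add_mem ihx ihy
    | mul x y hx hy ihx ihy =>
      have h1 : d (x * y) = x * d y + y * d x := d.leibniz x y
      rw [h1]
      exact add_mem (mul_mem hx ihy) (mul_mem hy ihx)
end
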